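/- arXiv:1705.02276 — 3 statements merged into one kernel-verified Lean document; each statement's English description precedes it below -/
import Mathlib

section
/- Let M and N be n×n positive semi-definite real symmetric matrices such that 0 ≤ M ≤ N⁻¹ in the Loewner order (in particular N is invertible). Then det(Id − MN) ≥ 1 − Tr(MN). -/
/-!
Conjugating by `S = √N` turns `M N` into the similar matrix `A = S M S`, and `0 ≤ M ≤ N⁻¹`
becomes `0 ≤ A ≤ 1`. So `det (1 - M N) = ∏ (1 - λᵢ)` and `Tr (M N) = ∑ λᵢ` for eigenvalues
`λᵢ ∈ [0, 1]`, and the claim is the Weierstrass product inequality `∏ (1 - λᵢ) ≥ 1 - ∑ λᵢ`.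
-/

open Matrix Finset
open scoped MatrixOrder

theorem Finset.one_sub_sum_le_prod_one_sub {ι R : Type*} [CommRing R] [LinearOrder R]
    [IsStrictOrderedRing R] (s : Finset ι) {f : ι → R} (h0 : ∀ i ∈ s, 0 ≤ f i)
    (h1 : ∀ i ∈ s, f i ≤ 1) : 1 - ∑ i ∈ s, f i ≤ ∏ i ∈ s, (1 - f i) := by
  classical
  induction s using Finset.induction with
  | empty => simp
  | insert a s ha ih =>
    rw [sum_insert ha, prod_insert ha]
    have ih' := ih (fun i hi => h0 i (mem_insert_of_mem hi))
      (fun i hi => h1 i (mem_insert_of_mem hi))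
    have hfa : 0 ≤ f a := h0 a (mem_insert_self a s)
    have hsum : 0 ≤ ∑ i ∈ s, f i := sum_nonneg fun i hi => h0 i (mem_insert_of_mem hi)
    have hfa' : 0 ≤ 1 - f a := sub_nonneg.mpr (h1 a (mem_insert_self a s))
    nlinarith [mul_le_mul_of_nonneg_left ih' hfa']

namespace Matrix

variable {ι 𝕜 : Type*} [Fintype ι] [DecidableEq ι] [RCLike 𝕜] {A : Matrix ι ι 𝕜}

lemma IsHermitian.det_one_sub_eq_prod (hA : A.IsHermitian) :
    (1 - A).det = ∏ i, (1 - (hA.eigenvalues i : 𝕜)) := by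
  rw [← (scalar ι).map_one, ← eval_charpoly, hA.charpoly_eq, Polynomial.eval_prod]
  simp

lemma IsHermitian.eigenvalues_le_one (hA : A.IsHermitian) (h : A ≤ 1) (i : ι) :
    hA.eigenvalues i ≤ 1 :=
  (CFC.le_one_iff A hA.isSelfAdjoint).mp h _ (hA.eigenvalues_mem_spectrum_real i)

theorem one_sub_trace_le_det_one_sub {A : Matrix ι ι ℝ} (h0 : 0 ≤ A) (h1 : A ≤ 1) :
    1 - A.trace ≤ (1 - A).det := by
  have hA := h0.posSemidef
  rw [hA.isHermitian.trace_eq_sum_eigenvalues, hA.isHermitian.det_one_sub_eq_prod]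
  exact one_sub_sum_le_prod_one_sub _ (fun i _ => hA.eigenvalues_nonneg i)
    (fun i _ => hA.isHermitian.eigenvalues_le_one h1 i)

end Matrix

/-- If `M, N` are PSD with `0 ≤ M ≤ N⁻¹` in the Loewner order and `N` invertible,
then `det(Id − MN) ≥ 1 − Tr(MN)`. -/
theorem stmt4 {n : ℕ} (M N : Matrix (Fin n) (Fin n) ℝ)
    (hM : M.PosSemidef) (hN : N.PosSemidef) (hNinv : IsUnit N.det)
    (hle : (N⁻¹ - M).PosSemidef) :
    1 - (M * N).trace ≤ (1 - M * N).det := by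
  set S := CFC.sqrt N
  have hSS : S * S = N := CFC.sqrt_mul_sqrt_self N hN.nonneg
  have hS : IsSelfAdjoint S := IsSelfAdjoint.of_nonneg (CFC.sqrt_nonneg N)
  have hSdet : IsUnit S.det := isUnit_of_mul_isUnit_left (by rwa [← det_mul, hSS])
  have hA0 : 0 ≤ S * M * S := hS.conjugate_nonneg hM.nonneg
  have hA1 : S * M * S ≤ 1 := calc
    S * M * S ≤ S * N⁻¹ * S := hS.conjugate_le_conjugate (le_iff.mpr hle)
    _ = 1 := by
      rw [← hSS, Matrix.mul_inv_rev, ← mul_assoc, mul_nonsing_inv _ hSdet, one_mul,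
        nonsing_inv_mul _ hSdet]
  have hdet : (1 - M * N).det = (1 - S * M * S).det := by
    rw [← hSS, ← mul_assoc, det_one_sub_mul_comm, ← mul_assoc]
  have htr : (M * N).trace = (S * M * S).trace := by
    rw [← hSS, ← mul_assoc, trace_mul_comm, ← mul_assoc]
  rw [hdet, htr]
  exact one_sub_trace_le_det_one_sub hA0 hA1
end

section
/- Let X be a DPP with bounded kernel K satisfying Condition ℋ. Then for every s > 0 and n ∈ ℕ, sup over Borel sets A ⊂ ℝ^d with |A| = s of E[2^{n·N(A)}] is at most exp((2^n − 1)·‖K‖_∞·s); in particular it is finite. -/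
/-!
With `t = 2 ^ n - 1`, expand `2 ^ (n N) = (1 + t) ^ N = ∑ₖ (N choose k) tᵏ` and integrate termwise.
The `k`-th binomial moment is `k!⁻¹ ∫_{Aᵏ} det K[x] dx`, and a positive semidefinite matrix whose
diagonal is bounded by `Kb` has determinant at most `Kbᵏ` (AM–GM on its eigenvalues), so the
`k`-th term is at most `(t Kb s)ᵏ / k!`; summing gives `exp (t Kb s)`.

As `N(A)` need not be measurable, its measurability is recovered from the integrability of
`2 ^ (n N(A))`; without integrability the Bochner integral is `0`.
-/

open MeasureTheory

open Finset in
theorem Real.prod_le_pow_card_of_sum_le {ι : Type*} (s : Finset ι) {z : ι → ℝ} {c : ℝ}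
    (hz : ∀ i ∈ s, 0 ≤ z i) (hsum : ∑ i ∈ s, z i ≤ #s * c) : ∏ i ∈ s, z i ≤ c ^ #s := by
  rcases s.eq_empty_or_nonempty with rfl | hs
  · simp
  have hcard : (0 : ℝ) < #s := by exact_mod_cast hs.card_pos
  have hprod : 0 ≤ ∏ i ∈ s, z i := prod_nonneg hz
  have amgm := Real.geom_mean_le_arith_mean s (fun _ => 1) z (fun _ _ => zero_le_one)
    (by simpa using hcard) hz
  simp only [Real.rpow_one, sum_const, nsmul_eq_mul, mul_one, one_mul] at amgm
  calc ∏ i ∈ s, z i = ((∏ i ∈ s, z i) ^ (#s : ℝ)⁻¹) ^ #s := by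
        rw [← Real.rpow_natCast, ← Real.rpow_mul hprod, inv_mul_cancel₀ hcard.ne', Real.rpow_one]
    _ ≤ c ^ #s := by
        gcongr
        have hc : 0 ≤ c := (mul_nonneg_iff_of_pos_left hcard).1 ((sum_nonneg hz).trans hsum)
        exact amgm.trans (div_le_of_le_mul₀ hcard.le hc (by linarith))

theorem Matrix.PosSemidef.det_le_pow_of_diag_le {ι : Type*} [Fintype ι] [DecidableEq ι]
    {M : Matrix ι ι ℝ} (hM : M.PosSemidef) {c : ℝ} (hc : ∀ i, M i i ≤ c) :
    M.det ≤ c ^ Fintype.card ι := by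
  rw [hM.1.det_eq_prod_eigenvalues]
  refine Real.prod_le_pow_card_of_sum_le Finset.univ (fun i _ => hM.eigenvalues_nonneg i) ?_
  have htrace := hM.1.trace_eq_sum_eigenvalues
  simp only [RCLike.ofReal_real_eq_id, id] at htrace ⊢
  rw [← htrace, Finset.card_univ]
  simpa [Matrix.trace] using Finset.sum_le_sum fun i (_ : i ∈ Finset.univ) => hc i

theorem setIntegral_det_le {α : Type*} [MeasurableSpace α] (μ : Measure α) [SigmaFinite μ]
    {k : ℕ} (K : α → α → ℝ) {c : ℝ} (hKc : ∀ x, K x x ≤ c)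
    (hK : ∀ x : Fin k → α, (Matrix.of fun a b => K (x a) (x b)).PosSemidef)
    {A : Set α} (hA : μ A ≠ ⊤) :
    ∫ x in Set.univ.pi fun _ : Fin k => A, (Matrix.of fun a b => K (x a) (x b)).det
        ∂(Measure.pi fun _ => μ) ≤ (c * μ.real A) ^ k := by
  have hvol : (Measure.pi fun _ : Fin k => μ) (Set.univ.pi fun _ => A) = μ A ^ k := by
    simp [Measure.pi_pi]
  have hbound : ∀ x ∈ Set.univ.pi fun _ : Fin k => A,
      ‖(Matrix.of fun a b => K (x a) (x b)).det‖ ≤ c ^ k := by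
    intro x _
    rw [Real.norm_of_nonneg (hK x).det_nonneg]
    simpa using (hK x).det_le_pow_of_diag_le fun i => hKc (x i)
  calc _ ≤ ‖∫ x in Set.univ.pi fun _ : Fin k => A, (Matrix.of fun a b => K (x a) (x b)).det
          ∂(Measure.pi fun _ => μ)‖ := le_abs_self _
    _ ≤ c ^ k * (Measure.pi fun _ : Fin k => μ).real (Set.univ.pi fun _ => A) :=
        norm_setIntegral_le_of_norm_le_const (by simp [hvol, ENNReal.pow_lt_top hA.lt_top]) hbound
    _ = (c * μ.real A) ^ k := by simp [measureReal_def, hvol, mul_pow]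

section Moments

variable {Ω : Type*} [MeasurableSpace Ω] {P : Measure Ω} {N : Ω → ℕ}

theorem aestronglyMeasurable_natCast_of_pow {b : ℝ} (hb : 1 < b)
    (hf : AEStronglyMeasurable (fun ω => b ^ N ω) P) :
    AEStronglyMeasurable (fun ω => (N ω : ℝ)) P := by
  have hlog : (fun ω => (N ω : ℝ)) = fun ω => Real.log (b ^ N ω) / Real.log b := by
    ext ω
    rw [Real.log_pow, mul_div_cancel_right₀ _ (Real.log_pos hb).ne']
  rw [hlog]
  exact (hf.aemeasurable.log.div_const _).aestronglyMeasurable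

theorem integrable_cast_choose_of_pow {b : ℝ} (hb : 2 ≤ b)
    (hf : Integrable (fun ω => b ^ N ω) P) (k : ℕ) :
    Integrable (fun ω => ((N ω).choose k : ℝ)) P := by
  have hN := aestronglyMeasurable_natCast_of_pow (by linarith) hf.1
  refine hf.mono' ?_ (Filter.Eventually.of_forall fun ω => ?_)
  · simp_rw [Nat.cast_choose_eq_descPochhammer_div]
    exact ((descPochhammer ℝ k).continuous.div_const _).comp_aestronglyMeasurable hN
  · rw [Real.norm_of_nonneg (Nat.cast_nonneg _)]
    calc ((N ω).choose k : ℝ) ≤ 2 ^ N ω := by exact_mod_cast Nat.choose_le_two_pow _ _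
      _ ≤ b ^ N ω := by gcongr

theorem integral_pow_le_exp_of_choose_moment_le {b a : ℝ} (hb : 1 ≤ b)
    (hint : ∀ k, Integrable (fun ω => ((N ω).choose k : ℝ)) P)
    (hmom : ∀ k, ∫ ω, ((N ω).choose k : ℝ) ∂P ≤ a ^ k / k.factorial) :
    ∫ ω, b ^ N ω ∂P ≤ Real.exp ((b - 1) * a) := by
  set c : ℕ → Ω → ℝ := fun k ω => (N ω).choose k * (b - 1) ^ k
  have hc_nonneg : ∀ k ω, 0 ≤ c k ω := fun k ω => by simp only [c]; bound
  have hc_int : ∀ k, Integrable (c k) P := fun k => (hint k).mul_const _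
  have hc_le : ∀ k, ∫ ω, c k ω ∂P ≤ ((b - 1) * a) ^ k / k.factorial := by
    intro k
    calc ∫ ω, c k ω ∂P = (∫ ω, ((N ω).choose k : ℝ) ∂P) * (b - 1) ^ k := integral_mul_const _ _
      _ ≤ a ^ k / k.factorial * (b - 1) ^ k :=
          mul_le_mul_of_nonneg_right (hmom k) (pow_nonneg (sub_nonneg.2 hb) k)
      _ = ((b - 1) * a) ^ k / k.factorial := by rw [mul_pow]; ring
  have hc_sum : Summable fun k => ∫ ω, c k ω ∂P :=
    (Real.summable_pow_div_factorial _).of_nonneg_of_le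
      (fun k => integral_nonneg (hc_nonneg k)) hc_le
  have hc_norm_sum : Summable fun k => ∫ ω, ‖c k ω‖ ∂P := by
    simpa only [fun k ω => Real.norm_of_nonneg (hc_nonneg k ω)] using hc_sum
  have hexpand : ∀ ω, b ^ N ω = ∑' k, c k ω := by
    intro ω
    rw [tsum_eq_sum (s := Finset.range (N ω + 1)) fun k hk => by
      simp [c, Nat.choose_eq_zero_of_lt (by simpa using hk)]]
    conv_lhs => rw [← sub_add_cancel b 1, add_pow]
    simp [c, mul_comm]
  calc ∫ ω, b ^ N ω ∂P = ∑' k, ∫ ω, c k ω ∂P := by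
        simp_rw [hexpand]
        exact (integral_tsum_of_summable_integral_norm hc_int hc_norm_sum).symm
    _ ≤ ∑' k : ℕ, ((b - 1) * a) ^ k / k.factorial :=
        hc_sum.tsum_le_tsum hc_le (Real.summable_pow_div_factorial _)
    _ = Real.exp ((b - 1) * a) := by rw [Real.exp_eq_exp_ℝ, NormedSpace.exp_eq_tsum_div]

end Moments

theorem stmt12_general {d : ℕ} {Ω : Type*} [MeasurableSpace Ω]
    (P : Measure Ω) [IsProbabilityMeasure P]
    (X : Ω → Set (EuclideanSpace ℝ (Fin d)))
    (K : EuclideanSpace ℝ (Fin d) → EuclideanSpace ℝ (Fin d) → ℝ)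
    (Kb : ℝ) (hKb : ∀ x y, |K x y| ≤ Kb)
    (hPSD : ∀ (k : ℕ) (x : Fin k → EuclideanSpace ℝ (Fin d)),
      (Matrix.of fun a b => K (x a) (x b)).PosSemidef)
    (n : ℕ) (s : ℝ) (hs : 0 < s)
    (A : Set (EuclideanSpace ℝ (Fin d)))
    (hvA : (volume A).toReal = s)
    (hmom : ∀ k : ℕ,
      (∫ ω, ((X ω ∩ A).ncard.choose k : ℝ) ∂P) * (k.factorial : ℝ)
        = ∫ x in (Set.univ.pi fun _ : Fin k => A),
            (Matrix.of fun a b => K (x a) (x b)).det) :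
    ∫ ω, (2 : ℝ) ^ (n * (X ω ∩ A).ncard) ∂P ≤ Real.exp ((2 ^ n - 1) * Kb * s) := by
  rcases Nat.eq_zero_or_pos n with rfl | hn
  · simp
  simp_rw [pow_mul]
  by_cases hf : Integrable (fun ω => ((2 : ℝ) ^ n) ^ (X ω ∩ A).ncard) P
  swap
  · rw [integral_undef hf]
    positivity
  have hA : volume A ≠ ⊤ := fun h => by simp [h] at hvA; linarith
  have hmom_le (k : ℕ) :
      ∫ ω, ((X ω ∩ A).ncard.choose k : ℝ) ∂P ≤ (Kb * s) ^ k / k.factorial := by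
    rw [le_div_iff₀ (by positivity), hmom k, ← hvA]
    exact setIntegral_det_le volume K (fun x => (le_abs_self _).trans (hKb x x)) (hPSD k) hA
  have htwo : (2 : ℝ) ≤ 2 ^ n := by simpa using pow_le_pow_right₀ one_le_two hn
  rw [mul_assoc]
  exact integral_pow_le_exp_of_choose_moment_le (by linarith)
    (integrable_cast_choose_of_pow htwo hf) hmom_le

/-- Exponential moments of the number of points of a DPP: if `X` is a DPP with bounded
kernel `K` (`|K| ≤ Kb`) satisfying Condition ℋ (so every matrix `K[x]` is PSD), and
`A` is a Borel set of volume `s`, then `E[2^{n N(A)}] ≤ exp((2^n − 1) Kb s)`.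
The DPP moment identity `E[binom(N(A),k)]·k! = ∫_{A^k} det K[x] dx` (`hmom`) is used. -/
theorem stmt12 {d : ℕ} {Ω : Type*} [MeasurableSpace Ω]
    (P : Measure Ω) [IsProbabilityMeasure P]
    (X : Ω → Set (EuclideanSpace ℝ (Fin d)))
    (K : EuclideanSpace ℝ (Fin d) → EuclideanSpace ℝ (Fin d) → ℝ)
    (Kb : ℝ) (hKb : ∀ x y, |K x y| ≤ Kb)
    (hPSD : ∀ (k : ℕ) (x : Fin k → EuclideanSpace ℝ (Fin d)),
      (Matrix.of fun a b => K (x a) (x b)).PosSemidef)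
    (n : ℕ) (s : ℝ) (hs : 0 < s)
    (A : Set (EuclideanSpace ℝ (Fin d))) (hAm : MeasurableSet A)
    (hvA : (volume A).toReal = s)
    (hmom : ∀ k : ℕ,
      (∫ ω, ((X ω ∩ A).ncard.choose k : ℝ) ∂P) * (k.factorial : ℝ)
        = ∫ x in (Set.univ.pi fun _ : Fin k => A),
            (Matrix.of fun a b => K (x a) (x b)).det) :
    ∫ ω, (2 : ℝ) ^ (n * (X ω ∩ A).ncard) ∂P ≤ Real.exp ((2 ^ n - 1) * Kb * s) :=
  stmt12_general P X K Kb hKb hPSD n s hs A hvA hmom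
end

section
/- Let 𝒦 be a trace-class positive self-adjoint operator with operator norm ‖𝒦‖ < 1 and eigenvalues (λ_i). Then exp(−Σ_{n≥1} Tr(𝒦^n)/n) = Π_i (1 − λ_i) ≥ (1 − ‖𝒦‖)^{Tr(𝒦)/‖𝒦‖}. -/
/-!
Summing the series `-log (1 - λ) = Σ_{n ≥ 1} λⁿ / n` over the eigenvalues (all terms are
nonnegative, so the two sums may be interchanged) identifies the left-hand side with
`Π_i (1 - λ_i)`. For the bound, concavity of `t ↦ log (1 - t)` on `[0, κ]` puts it above its
chord, `log (1 - t) ≥ t · log (1 - κ) / κ`; summing over the eigenvalues and exponentiating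
gives `Π_i (1 - λ_i) ≥ (1 - κ)^(Σ_i λ_i / κ)`.
-/

open Real

variable {ι : Type*} {f : ι → ℝ}

lemma summable_log_one_sub_of_summable (hf : Summable f) :
    Summable fun i ↦ log (1 - f i) :=
  (Real.summable_log_one_add_of_summable hf.neg).congr fun _ ↦ by rw [← sub_eq_add_neg]

lemma tsum_tsum_pow_div_eq_neg_tsum_log_one_sub (hf0 : ∀ i, 0 ≤ f i) (hf1 : ∀ i, f i < 1)
    (hf : Summable f) :
    ∑' n : ℕ, (∑' i, f i ^ (n + 1)) / (n + 1) = -∑' i, log (1 - f i) := by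
  have hlog i : HasSum (fun n : ℕ ↦ f i ^ (n + 1) / (n + 1)) (-log (1 - f i)) :=
    hasSum_pow_div_log_of_abs_lt_one (abs_lt.2 ⟨by linarith [hf0 i], hf1 i⟩)
  have hprod : Summable (Function.uncurry fun i (n : ℕ) ↦ f i ^ (n + 1) / (n + 1)) := by
    refine (summable_prod_of_nonneg fun ⟨i, _⟩ ↦
      div_nonneg (pow_nonneg (hf0 i) _) (by positivity)).2 ⟨fun i ↦ (hlog i).summable, ?_⟩
    simpa only [Function.uncurry_apply_pair, (hlog _).tsum_eq] using
      (summable_log_one_sub_of_summable hf).neg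
  calc ∑' n : ℕ, (∑' i, f i ^ (n + 1)) / (n + 1)
      = ∑' n : ℕ, ∑' i, f i ^ (n + 1) / (n + 1) := by simp only [tsum_div_const]
    _ = ∑' i, ∑' n : ℕ, f i ^ (n + 1) / (n + 1) := hprod.tsum_comm
    _ = -∑' i, log (1 - f i) := by rw [← tsum_neg]; exact tsum_congr fun i ↦ (hlog i).tsum_eq

lemma rexp_neg_tsum_tsum_pow_div_eq_tprod_one_sub (hf0 : ∀ i, 0 ≤ f i) (hf1 : ∀ i, f i < 1)
    (hf : Summable f) :
    rexp (-∑' n : ℕ, (∑' i, f i ^ (n + 1)) / (n + 1)) = ∏' i, (1 - f i) := by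
  rw [tsum_tsum_pow_div_eq_neg_tsum_log_one_sub hf0 hf1 hf, neg_neg]
  exact rexp_tsum_eq_tprod (fun i ↦ sub_pos.2 (hf1 i)) (summable_log_one_sub_of_summable hf)

lemma log_one_sub_div_mul_le_log_one_sub {κ t : ℝ} (hκ0 : 0 < κ) (hκ1 : κ < 1)
    (ht0 : 0 ≤ t) (htκ : t ≤ κ) :
    log (1 - κ) / κ * t ≤ log (1 - t) := by
  have hconc := strictConcaveOn_log_Ioi.concaveOn.2 (x := 1) (y := 1 - κ)
    (Set.mem_Ioi.2 one_pos) (Set.mem_Ioi.2 (sub_pos.2 hκ1))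
    (sub_nonneg.2 ((div_le_one hκ0).2 htκ)) (div_nonneg ht0 hκ0.le) (sub_add_cancel 1 (t / κ))
  have hchord : (1 - t / κ) * 1 + t / κ * (1 - κ) = 1 - t := by
    field_simp
    ring
  simp only [smul_eq_mul, log_one, mul_zero, zero_add, hchord] at hconc
  rwa [div_mul_comm]

lemma rpow_tsum_div_le_tprod_one_sub {κ : ℝ} (hκ0 : 0 < κ) (hκ1 : κ < 1)
    (hf : ∀ i, 0 ≤ f i ∧ f i ≤ κ) (hsum : Summable f) :
    (1 - κ) ^ ((∑' i, f i) / κ) ≤ ∏' i, (1 - f i) := by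
  have hlog := summable_log_one_sub_of_summable hsum
  rw [← rexp_tsum_eq_tprod (fun i ↦ by linarith [(hf i).2]) hlog, rpow_def_of_pos (by linarith),
    exp_le_exp]
  calc log (1 - κ) * ((∑' i, f i) / κ) = ∑' i, log (1 - κ) / κ * f i := by
        rw [tsum_mul_left]
        ring
    _ ≤ ∑' i, log (1 - f i) := (hsum.mul_left _).tsum_le_tsum
        (fun i ↦ log_one_sub_div_mul_le_log_one_sub hκ0 hκ1 (hf i).1 (hf i).2) hlog

/-- For a trace-class positive operator with eigenvalues `lam i ∈ [0, κ]`, `κ < 1`,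
and trace `T = Σ lam i`:
`exp(−Σ_{n≥1} Tr(𝒦^n)/n) = Π_i (1 − lam i) ≥ (1 − κ)^{T/κ}`. -/
theorem stmt16 (lam : ℕ → ℝ) (κ T : ℝ) (hκ0 : 0 < κ) (hκ1 : κ < 1)
    (hlam : ∀ i, 0 ≤ lam i ∧ lam i ≤ κ) (hsum : Summable lam)
    (hT : ∑' i, lam i = T) :
    Real.exp (-(∑' n : ℕ, (∑' i, lam i ^ (n + 1)) / (n + 1))) = ∏' i, (1 - lam i) ∧
    Real.rpow (1 - κ) (T / κ) ≤ ∏' i, (1 - lam i) :=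
  ⟨rexp_neg_tsum_tsum_pow_div_eq_tprod_one_sub (fun i ↦ (hlam i).1)
      (fun i ↦ (hlam i).2.trans_lt hκ1) hsum,
    hT ▸ rpow_tsum_div_le_tprod_one_sub hκ0 hκ1 hlam hsum⟩
end
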